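/- arXiv:1906.08923 — 4 statements merged into one kernel-verified Lean document; each statement's English description precedes it below -/
import Mathlib

section
/- Let ν ∈ (0,1), 0 < α₀ ≤ α₁, and 0 < α₂ ≤ (ν/3) α₁. If Ω ⊆ ℝ is ν-porous on scales α₀ to α₁, then the neighborhood Ω(α₂) = Ω + [−α₂, α₂] is (ν/3)-porous on scales max(α₀, (3/ν) α₂) to α₁. -/
open scoped Pointwise

/-- `Ω` is `ν`-porous on scales `α₀` to `α₁`. -/
def IsPorousOn (ν α₀ α₁ : ℝ) (Ω : Set ℝ) : Prop :=
  ∀ x L : ℝ, α₀ ≤ L → L ≤ α₁ →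
    ∃ y : ℝ, Set.Icc y (y + ν * L) ⊆ Set.Icc x (x + L) ∧ Set.Icc y (y + ν * L) ∩ Ω = ∅

/-- **Porosity of neighborhoods.** If `Ω ⊆ ℝ` is `ν`-porous on scales `α₀` to `α₁`
and `0 < α₂ ≤ (ν/3)α₁`, then `Ω(α₂) = Ω + [−α₂, α₂]` is `(ν/3)`-porous on scales
`max(α₀, (3/ν)α₂)` to `α₁`. -/
theorem stmt2 :
    ∀ ν α₀ α₁ α₂ : ℝ, 0 < ν → ν < 1 → 0 < α₀ → α₀ ≤ α₁ → 0 < α₂ → α₂ ≤ ν / 3 * α₁ →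
    ∀ Ω : Set ℝ, IsPorousOn ν α₀ α₁ Ω →
      IsPorousOn (ν / 3) (max α₀ (3 / ν * α₂)) α₁ (Ω + Set.Icc (-α₂) α₂) := by
  intro ν α₀ α₁ α₂ hν hν1 hα₀ h01 hα₂ h2 Ω hP
  intro x L hL1 hL2
  obtain ⟨y, hsub, hdisj⟩ := hP x L (le_trans (le_max_left _ _) hL1) hL2
  have hL3 : 3 / ν * α₂ ≤ L := le_trans (le_max_right _ _) hL1
  have hkey : α₂ ≤ ν / 3 * L := by
    have h := mul_le_mul_of_nonneg_left hL3 (le_of_lt (by positivity : (0:ℝ) < ν/3))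
    calc α₂ = ν/3 * (3/ν * α₂) := by field_simp
    _ ≤ ν/3 * L := h
  refine ⟨y + α₂, ?_, ?_⟩
  · intro z hz
    simp only [Set.mem_Icc] at hz
    exact hsub (Set.mem_Icc.mpr ⟨by linarith [hz.1], by linarith [hz.2, hkey]⟩)
  · ext z
    simp only [Set.mem_inter_iff, Set.mem_empty_iff_false, iff_false]
    rintro ⟨hz, hzΩ⟩
    rw [Set.mem_add] at hzΩ
    obtain ⟨a, ha, b, hb, hab⟩ := hzΩ
    have hmem : a ∈ Set.Icc y (y + ν*L) ∩ Ω := by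
      refine ⟨?_, ha⟩
      simp only [Set.mem_Icc] at hz hb ⊢
      constructor <;> nlinarith [hz.1, hz.2, hb.1, hb.2]
    rw [hdisj] at hmem
    exact hmem
end

section
/- Let ψ : ℝ → ℝ be a C² diffeomorphism such that for some C₁ ≥ 1 one has max(sup |ψ′|, sup |ψ′|^{−1}, sup |ψ″|) ≤ C₁. Let ν ∈ (0,1), 0 < α₀ ≤ α₁, and assume α₀ ≤ min(C₁^{−2} α₁, (1/2) C₁^{−4}). If Ω ⊆ ℝ is ν-porous on scales α₀ to α₁, then the image ψ(Ω) is (ν/2)-porous on scales C₁ α₀ to min(C₁^{−1} α₁, (1/2) C₁^{−3}). -/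
open Set Function

/-- Porosity is invariant under negation. -/
lemma isPorousOn_neg {ν a b : ℝ} {S : Set ℝ} (hν : 0 ≤ ν) (ha : 0 < a)
    (h : IsPorousOn ν a b S) : IsPorousOn ν a b ((fun t : ℝ => -t) '' S) := by
  intro x L hL1 hL2
  have hL0 : 0 < L := lt_of_lt_of_le ha hL1
  have hνL : 0 ≤ ν * L := mul_nonneg hν hL0.le
  obtain ⟨y, hsub, hdisj⟩ := h (-(x + L)) L hL1 hL2
  have hmem1 := hsub ⟨le_refl y, by linarith⟩
  have hmem2 := hsub ⟨by linarith, le_refl (y + ν * L)⟩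
  simp only [Set.mem_Icc] at hmem1 hmem2
  refine ⟨-(y + ν * L), ?_, ?_⟩
  · rintro z ⟨hz1, hz2⟩
    exact ⟨by linarith [hmem2.2], by linarith [hmem1.1]⟩
  · rw [Set.eq_empty_iff_forall_notMem]
    rintro z ⟨⟨hz1, hz2⟩, s, hs, hzs⟩
    have : -z ∈ Set.Icc y (y + ν * L) ∩ S := by
      have hzs' : -s = z := hzs
      refine ⟨⟨by linarith, by linarith⟩, ?_⟩
      have : s = -z := by linarith
      rwa [← this]
    rw [hdisj] at this
    exact this

/-- The core lemma, for strictly monotone `ψ`. -/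
lemma stmt3_mono (ψ : ℝ → ℝ) (C₁ : ℝ) (hC : 1 ≤ C₁)
    (hψ : ContDiff ℝ 2 ψ) (hbij : Function.Bijective ψ) (hmono : StrictMono ψ)
    (hd1 : ∀ x : ℝ, |deriv ψ x| ≤ C₁)
    (hd2 : ∀ x : ℝ, C₁⁻¹ ≤ |deriv ψ x|)
    (hd3 : ∀ x : ℝ, |deriv (deriv ψ) x| ≤ C₁)
    (ν α₀ α₁ : ℝ) (hν0 : 0 < ν) (hν1 : ν < 1) (hα0 : 0 < α₀) (hαα : α₀ ≤ α₁)
    (hsmall : α₀ ≤ min ((C₁ ^ 2)⁻¹ * α₁) (2⁻¹ * (C₁ ^ 4)⁻¹))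
    (Ω : Set ℝ) (hΩ : IsPorousOn ν α₀ α₁ Ω) :
    IsPorousOn (ν / 2) (C₁ * α₀) (min (C₁⁻¹ * α₁) (2⁻¹ * (C₁ ^ 3)⁻¹)) (ψ '' Ω) := by
  have hC0 : (0 : ℝ) < C₁ := lt_of_lt_of_le one_pos hC
  have hCi0 : (0 : ℝ) < C₁⁻¹ := inv_pos.mpr hC0
  have hCi : C₁⁻¹ * C₁ = 1 := inv_mul_cancel₀ hC0.ne'
  have hdiff : Differentiable ℝ ψ := hψ.differentiable two_ne_zero
  have hdiff' : Differentiable ℝ (deriv ψ) := by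
    have h2 : ContDiff ℝ ((1 : ℕ) + 1) ψ := by exact_mod_cast hψ
    exact ((contDiff_succ_iff_deriv.mp h2).2.2).differentiable (by norm_num)
  -- mean value theorem, convenient form
  have k1 : ∀ u v : ℝ, u < v →
      ∃ c, c ∈ Set.Ioo u v ∧ ψ v - ψ u = deriv ψ c * (v - u) := by
    intro u v huv
    obtain ⟨c, hc, hslope⟩ :=
      exists_deriv_eq_slope ψ huv hdiff.continuous.continuousOn hdiff.differentiableOn
    refine ⟨c, hc, ?_⟩
    rw [hslope]
    exact (div_mul_cancel₀ _ (sub_ne_zero.mpr huv.ne')).symm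
  -- Lipschitz bound on the derivative
  have k2 : ∀ u v : ℝ, |deriv ψ u - deriv ψ v| ≤ C₁ * |u - v| := by
    intro u v
    have := Convex.norm_image_sub_le_of_norm_deriv_le
      (f := deriv ψ) (C := C₁) (s := Set.univ)
      (fun x _ => hdiff' x)
      (fun x _ => by simpa [Real.norm_eq_abs] using hd3 x)
      convex_univ (Set.mem_univ v) (Set.mem_univ u)
    simpa [Real.norm_eq_abs] using this
  intro x L hL1 hL2
  have hL2a : L ≤ C₁⁻¹ * α₁ := le_trans hL2 (min_le_left _ _)
  have hL2b : L ≤ 2⁻¹ * (C₁ ^ 3)⁻¹ := le_trans hL2 (min_le_right _ _)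
  have hL0 : 0 < L := lt_of_lt_of_le (mul_pos hC0 hα0) hL1
  obtain ⟨a, ha⟩ := hbij.surjective x
  obtain ⟨b, hb⟩ := hbij.surjective (x + L)
  have hab : a < b := by
    by_contra hcon
    push_neg at hcon
    have : ψ b ≤ ψ a := hmono.monotone hcon
    rw [ha, hb] at this; linarith
  set L' := b - a with hL'def
  clear_value L'
  have hL'0 : 0 < L' := by simp [hL'def]; linarith
  obtain ⟨c, hc, hceq⟩ := k1 a b hab
  rw [ha, hb] at hceq
  have hLeq : L = deriv ψ c * L' := by rw [hL'def, ← hceq]; ring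
  have hdc0 : 0 < deriv ψ c := by
    by_contra hcon
    push_neg at hcon
    nlinarith [mul_nonneg (neg_nonneg.mpr hcon) hL'0.le]
  have hdcu : deriv ψ c ≤ C₁ := le_trans (le_abs_self _) (hd1 c)
  have hdcl : C₁⁻¹ ≤ deriv ψ c := le_trans (hd2 c) (le_of_eq (abs_of_pos hdc0))
  -- bounds on L'
  have hL'low : α₀ ≤ L' := by
    have h1 : C₁ * α₀ ≤ C₁ * L' := by nlinarith
    exact le_of_mul_le_mul_left h1 hC0
  have hL'le : L' ≤ C₁ * L := by
    have h1 : C₁⁻¹ * L' ≤ L := by nlinarith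
    nlinarith [mul_le_mul_of_nonneg_left h1 hC0.le]
  have hL'up : L' ≤ α₁ := by
    have h1 : C₁ * (C₁⁻¹ * α₁) = α₁ := by field_simp
    nlinarith [mul_le_mul_of_nonneg_left hL2a hC0.le]
  obtain ⟨y, hsub, hdisj⟩ := hΩ a L' hL'low hL'up
  have hνL' : 0 < ν * L' := mul_pos hν0 hL'0
  have hy1 : a ≤ y := (hsub ⟨le_refl y, by linarith⟩).1
  have hy2 : y + ν * L' ≤ a + L' := (hsub ⟨by linarith, le_refl _⟩).2
  have hy2' : y + ν * L' ≤ b := by rw [hL'def] at hy2 ⊢; linarith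
  obtain ⟨d, hd, hdeq⟩ := k1 y (y + ν * L') (by linarith)
  -- derivative at d is at least half the derivative at c
  have hdist : |d - c| ≤ L' := by
    simp only [Set.mem_Ioo] at hc hd
    rw [abs_le]
    constructor <;> linarith [hc.1, hc.2, hd.1, hd.2, hy1, hy2', hL'def]
  have hCL' : C₁ * L' ≤ 2⁻¹ * C₁⁻¹ := by
    have h3 : C₁ ^ 2 * (2⁻¹ * (C₁ ^ 3)⁻¹) = 2⁻¹ * C₁⁻¹ := by
      field_simp
    calc C₁ * L' ≤ C₁ * (C₁ * L) := mul_le_mul_of_nonneg_left hL'le hC0.le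
      _ = C₁ ^ 2 * L := by ring
      _ ≤ C₁ ^ 2 * (2⁻¹ * (C₁ ^ 3)⁻¹) := mul_le_mul_of_nonneg_left hL2b (by positivity)
      _ = 2⁻¹ * C₁⁻¹ := h3
  have hdd : deriv ψ c / 2 ≤ deriv ψ d := by
    have h1 : |deriv ψ d - deriv ψ c| ≤ C₁ * L' :=
      le_trans (k2 d c) (mul_le_mul_of_nonneg_left hdist hC0.le)
    have h2 : deriv ψ c - deriv ψ d ≤ 2⁻¹ * C₁⁻¹ := by
      have := abs_le.mp h1
      linarith [this.1, hCL']
    linarith [hdcl]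
  -- the hole in the image
  have hhole : ν / 2 * L ≤ ψ (y + ν * L') - ψ y := by
    have h1 : ψ (y + ν * L') - ψ y = deriv ψ d * (ν * L') := by
      rw [hdeq]; ring
    rw [h1, hLeq]
    calc ν / 2 * (deriv ψ c * L') = deriv ψ c / 2 * (ν * L') := by ring
      _ ≤ deriv ψ d * (ν * L') := mul_le_mul_of_nonneg_right hdd hνL'.le
  refine ⟨ψ y, ?_, ?_⟩
  · rintro z ⟨hz1, hz2⟩
    constructor
    · calc x = ψ a := ha.symm
        _ ≤ ψ y := hmono.monotone hy1
        _ ≤ z := hz1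
    · calc z ≤ ψ y + ν / 2 * L := hz2
        _ ≤ ψ (y + ν * L') := by linarith
        _ ≤ ψ b := hmono.monotone hy2'
        _ = x + L := hb
  · rw [Set.eq_empty_iff_forall_notMem]
    rintro z ⟨⟨hz1, hz2⟩, w, hw, hwz⟩
    have hw1 : y ≤ w := by
      by_contra hcon
      push_neg at hcon
      have : ψ w < ψ y := hmono hcon
      rw [hwz] at this; linarith
    have hw2 : w ≤ y + ν * L' := by
      by_contra hcon
      push_neg at hcon
      have : ψ (y + ν * L') < ψ w := hmono hcon
      rw [hwz] at this; linarith
    have : w ∈ Set.Icc y (y + ν * L') ∩ Ω := ⟨⟨hw1, hw2⟩, hw⟩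
    rw [hdisj] at this
    exact this

/-- **Porosity of images under `C²` diffeomorphisms.**
Let `ψ : ℝ → ℝ` be a `C²` diffeomorphism with
`max(sup|ψ′|, sup|ψ′|⁻¹, sup|ψ″|) ≤ C₁` for some `C₁ ≥ 1`.  Let `ν ∈ (0,1)`,
`0 < α₀ ≤ α₁` and `α₀ ≤ min(C₁⁻² α₁, (1/2) C₁⁻⁴)`.  If `Ω ⊆ ℝ` is `ν`-porous on
scales `α₀` to `α₁`, then `ψ(Ω)` is `(ν/2)`-porous on scales `C₁ α₀` to
`min(C₁⁻¹ α₁, (1/2) C₁⁻³)`. -/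
theorem stmt3 :
    ∀ (ψ : ℝ → ℝ) (C₁ : ℝ), 1 ≤ C₁ →
      ContDiff ℝ 2 ψ → Function.Bijective ψ →
      (∀ x : ℝ, |deriv ψ x| ≤ C₁) →
      (∀ x : ℝ, C₁⁻¹ ≤ |deriv ψ x|) →
      (∀ x : ℝ, |deriv (deriv ψ) x| ≤ C₁) →
    ∀ ν α₀ α₁ : ℝ, 0 < ν → ν < 1 → 0 < α₀ → α₀ ≤ α₁ →
      α₀ ≤ min ((C₁ ^ 2)⁻¹ * α₁) (2⁻¹ * (C₁ ^ 4)⁻¹) →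
    ∀ Ω : Set ℝ, IsPorousOn ν α₀ α₁ Ω →
      IsPorousOn (ν / 2) (C₁ * α₀) (min (C₁⁻¹ * α₁) (2⁻¹ * (C₁ ^ 3)⁻¹)) (ψ '' Ω) := by
  intro ψ C₁ hC hψ hbij hd1 hd2 hd3 ν α₀ α₁ hν0 hν1 hα0 hαα hsmall Ω hΩ
  have hC0 : (0 : ℝ) < C₁ := lt_of_lt_of_le one_pos hC
  rcases Continuous.strictMono_of_inj hψ.continuous hbij.injective with hmono | hanti
  · exact stmt3_mono ψ C₁ hC hψ hbij hmono hd1 hd2 hd3 ν α₀ α₁ hν0 hν1 hα0 hαα hsmall Ω hΩ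
  · set φ : ℝ → ℝ := fun t => -ψ t with hφdef
    have hφmono : StrictMono φ := fun u v huv => neg_lt_neg (hanti huv)
    have hφdiff : ContDiff ℝ 2 φ := hψ.neg
    have hφbij : Function.Bijective φ := neg_involutive.bijective.comp hbij
    have hφd : deriv φ = fun t => -deriv ψ t := by
      funext t
      exact deriv.neg
    have h1 : ∀ x : ℝ, |deriv φ x| ≤ C₁ := by
      intro t; rw [hφd]; simpa using hd1 t
    have h2 : ∀ x : ℝ, C₁⁻¹ ≤ |deriv φ x| := by
      intro t; rw [hφd]; simpa using hd2 t
    have h3 : ∀ x : ℝ, |deriv (deriv φ) x| ≤ C₁ := by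
      intro t
      rw [hφd]
      have : deriv (fun t => -deriv ψ t) t = -deriv (deriv ψ) t := deriv.neg
      rw [this]
      simpa using hd3 t
    have hkey := stmt3_mono φ C₁ hC hφdiff hφbij hφmono h1 h2 h3 ν α₀ α₁ hν0 hν1 hα0 hαα
      hsmall Ω hΩ
    have himg : ψ '' Ω = (fun t : ℝ => -t) '' (φ '' Ω) := by
      rw [Set.image_image]
      simp [hφdef]
    rw [himg]
    exact isPorousOn_neg (by positivity) (mul_pos hC0 hα0) hkey
end

section
/- For every N ∈ ℕ and every choice of constants D₀, …, D_N > 0 there exists a constant C′_N, depending only on N and D₀, …, D_N, with the following property. Let h ∈ (0,1], and let (χ_j⁻)_{j∈ℤ} and (χ_k⁺)_{k∈ℤ} be families of smooth functions ℝ → [0,1] such that supp χ_j⁻ ⊆ (j−1, j+1), supp χ_k⁺ ⊆ (k−1, k+1), and sup_ℝ |∂^m χ_j⁻| ≤ D_m h^{−m}, sup_ℝ |∂^m χ_k⁺| ≤ D_m h^{−m} for all m ≤ N and all j, k ∈ ℤ. Define the bounded operators A_{jk} := χ_j⁻ ∘ F_h ∘ χ_k⁺ on L²(ℝ) (multiplication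 by χ_k⁺, followed by F_h, followed by multiplication by χ_j⁻). Then for all j, j′, k, k′ ∈ ℤ one has ‖A_{jk} A_{j′k′}^*‖_{L²(ℝ)→L²(ℝ)} ≤ C′_N h^{−1} (1 + |j − j′| + |k − k′|)^{−N} and ‖A_{j′k′}^* A_{jk}‖_{L²(ℝ)→L²(ℝ)} ≤ C′_N h^{−1} (1 + |j − j′| + |k − k′|)^{−N}. -/
open MeasureTheory

/-- The semiclassical Fourier transform
`F_h f (ξ) = (2πh)^(-1/2) ∫ e^(-ixξ/h) f(x) dx`, defined pointwise. -/
noncomputable def semiFT (h : ℝ) (f : ℝ → ℂ) : ℝ → ℂ := fun ξ =>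
  (Real.sqrt (2 * Real.pi * h))⁻¹ •
    ∫ x : ℝ, Complex.exp (-Complex.I * (x : ℂ) * (ξ : ℂ) / (h : ℂ)) * f x

/-- The inverse (adjoint) semiclassical Fourier transform
`F_h⁻¹ g (x) = (2πh)^(-1/2) ∫ e^(+ixξ/h) g(ξ) dξ`, defined pointwise. -/
noncomputable def semiFTinv (h : ℝ) (g : ℝ → ℂ) : ℝ → ℂ := fun x =>
  (Real.sqrt (2 * Real.pi * h))⁻¹ •
    ∫ ξ : ℝ, Complex.exp (Complex.I * (x : ℂ) * (ξ : ℂ) / (h : ℂ)) * g ξ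

open Real Set Complex Function

namespace AOrth

lemma contDiff_iteratedDeriv' (ψ : ℝ → ℂ) (hψ : ContDiff ℝ (⊤:ℕ∞) ψ) (n : ℕ) :
    ContDiff ℝ (⊤:ℕ∞) (iteratedDeriv n ψ) := by
  rw [iteratedDeriv_eq_iterate]; exact hψ.iterate_deriv n

lemma hcs_iteratedDeriv {ψ : ℝ → ℂ} (hc : HasCompactSupport ψ) (n : ℕ) :
    HasCompactSupport (iteratedDeriv n ψ) := by
  induction n with
  | zero => simpa [iteratedDeriv_zero] using hc
  | succ n ih => rw [iteratedDeriv_succ]; exact ih.deriv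

lemma support_iteratedDeriv_subset (u : ℝ → ℂ) (n : ℕ) :
    support (iteratedDeriv n u) ⊆ tsupport u := by
  induction n with
  | zero => rw [iteratedDeriv_zero]; exact subset_closure
  | succ n ih =>
    rw [iteratedDeriv_succ]
    exact (support_deriv_subset).trans (closure_minimal ih isClosed_closure)

lemma iteratedDeriv_ofReal' (g : ℝ → ℝ) (hg : ContDiff ℝ (⊤:ℕ∞) g) (n : ℕ) :
    (iteratedDeriv n (fun t => ((g t : ℝ) : ℂ))) = fun x => ((iteratedDeriv n g x : ℝ) : ℂ) := by
  induction n with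
  | zero => simp [iteratedDeriv_zero]
  | succ n ih =>
    funext x
    rw [iteratedDeriv_succ, iteratedDeriv_succ, ih]
    have hdiff : DifferentiableAt ℝ (iteratedDeriv n g) x :=
      (hg.differentiable_iteratedDeriv n (by exact_mod_cast ENat.coe_lt_top n)).differentiableAt
    exact hdiff.hasDerivAt.ofReal_comp.deriv


lemma ibp_once (ψ : ℝ → ℂ) (hψ : ContDiff ℝ (⊤:ℕ∞) ψ) (hc : HasCompactSupport ψ) (l : ℝ) :
    ∫ t : ℝ, Complex.exp ((↑(l*t)) * Complex.I) * deriv ψ t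
      = -((l:ℂ)*Complex.I) * ∫ t : ℝ, Complex.exp ((↑(l*t)) * Complex.I) * ψ t := by
  set u : ℝ → ℂ := fun t => Complex.exp ((↑(l*t)) * Complex.I) with hu_def
  set u' : ℝ → ℂ := fun t => ((l:ℂ)*Complex.I) * Complex.exp ((↑(l*t)) * Complex.I) with hu'_def
  have hu : ∀ t : ℝ, HasDerivAt u (u' t) t := by
    intro t
    have h1 : HasDerivAt (fun t : ℝ => ((l*t : ℝ):ℂ)) ((l:ℂ)) t := by
      simpa using (((hasDerivAt_id t).const_mul l).ofReal_comp (z := t))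
    have h2 : HasDerivAt (fun t : ℝ => ((l*t:ℝ):ℂ) * Complex.I) ((l:ℂ)*Complex.I) t :=
      h1.mul_const Complex.I
    have := h2.cexp
    simpa [hu_def, hu'_def, mul_comm] using this
  have hucont : Continuous u := by fun_prop
  have hu'cont : Continuous u' := by fun_prop
  have hψcont : Continuous ψ := hψ.continuous
  have hdψcont : Continuous (deriv ψ) := hψ.continuous_deriv (by exact_mod_cast le_top)
  have hψd : ∀ t : ℝ, HasDerivAt ψ (deriv ψ t) t :=
    fun t => ((hψ.differentiable (by simp)) t).hasDerivAt
  have h1 : Integrable (u * deriv ψ) :=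
    Continuous.integrable_of_hasCompactSupport (hucont.mul hdψcont) (hc.deriv.mul_left)
  have h2 : Integrable (u' * ψ) :=
    Continuous.integrable_of_hasCompactSupport (hu'cont.mul hψcont) (hc.mul_left)
  have h3 : Integrable (u * ψ) :=
    Continuous.integrable_of_hasCompactSupport (hucont.mul hψcont) (hc.mul_left)
  have key := MeasureTheory.integral_mul_deriv_eq_deriv_mul_of_integrable (fun t _ => hu t) (fun t _ => hψd t) h1 h2 h3
  rw [key, ← integral_neg]
  rw [show -((l:ℂ)*Complex.I) * ∫ t : ℝ, Complex.exp ((↑(l*t)) * Complex.I) * ψ t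
      = ∫ t : ℝ, -((l:ℂ)*Complex.I) * (Complex.exp ((↑(l*t)) * Complex.I) * ψ t) from
    (integral_const_mul _ _).symm]
  congr 1; funext t; simp only [hu'_def]; ring
lemma ibp_iter (ψ : ℝ → ℂ) (hψ : ContDiff ℝ (⊤:ℕ∞) ψ) (hc : HasCompactSupport ψ) (l : ℝ) (n : ℕ) :
    ∫ t : ℝ, Complex.exp ((↑(l*t)) * Complex.I) * iteratedDeriv n ψ t
      = (-((l:ℂ)*Complex.I))^n * ∫ t : ℝ, Complex.exp ((↑(l*t)) * Complex.I) * ψ t := by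
  induction n with
  | zero => simp [iteratedDeriv_zero]
  | succ n ih =>
    rw [iteratedDeriv_succ]
    rw [ibp_once (iteratedDeriv n ψ) (contDiff_iteratedDeriv' ψ hψ n) (hcs_iteratedDeriv hc n) l]
    rw [ih, pow_succ]; ring

lemma osc_bound (ψ : ℝ → ℂ) (hψ : ContDiff ℝ (⊤:ℕ∞) ψ) (hc : HasCompactSupport ψ)
    {l : ℝ} (hl : l ≠ 0) (n : ℕ) :
    ‖∫ t : ℝ, Complex.exp ((↑(l*t)) * Complex.I) * ψ t‖
      ≤ (|l|⁻¹)^n * ∫ t : ℝ, ‖iteratedDeriv n ψ t‖ := by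
  have key := ibp_iter ψ hψ hc l n
  have h1 : ‖∫ t : ℝ, Complex.exp ((↑(l*t)) * Complex.I) * iteratedDeriv n ψ t‖
      ≤ ∫ t : ℝ, ‖iteratedDeriv n ψ t‖ := by
    refine (norm_integral_le_integral_norm _).trans_eq ?_
    congr 1; funext t
    rw [norm_mul]
    have : ‖cexp ((↑(l*t)) * Complex.I)‖ = 1 := Complex.norm_exp_ofReal_mul_I (l*t)
    push_cast at this
    simp [this]
  rw [key, norm_mul, norm_pow, norm_neg, norm_mul, Complex.norm_I, Complex.norm_real,
    Real.norm_eq_abs, mul_one] at h1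
  have hpos : (0:ℝ) < |l|^n := by positivity
  rw [inv_pow]
  rw [← le_div_iff₀' hpos] at h1
  simpa [div_eq_inv_mul] using h1
lemma integral_norm_le_of_support_subset {u : ℝ → ℂ} (hu : Integrable u)
    {a b S : ℝ} (hS : 0 ≤ S) (hab : a ≤ b) (hsupp : support u ⊆ Icc a b)
    (hbd : ∀ t, ‖u t‖ ≤ S) :
    ∫ t, ‖u t‖ ≤ S * (b - a) := by
  · have hpt : ∀ t, ‖u t‖ ≤ (Icc a b).indicator (fun _ => S) t := by
      intro t
      by_cases ht : t ∈ Icc a b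
      · simpa [Set.indicator_of_mem ht] using hbd t
      · have hz : u t = 0 := by
          by_contra hne
          exact ht (hsupp hne)
        simp [Set.indicator_of_notMem ht, hz]
    have hind : Integrable ((Icc a b).indicator (fun _ => S)) := by
      rw [integrable_indicator_iff measurableSet_Icc]
      exact (integrableOn_const_iff (by simp)).mpr (Or.inr (by simp [Real.volume_Icc]))
    calc ∫ t, ‖u t‖ ≤ ∫ t, (Icc a b).indicator (fun _ => S) t := integral_mono hu.norm hind hpt
      _ = S * (b - a) := by
          rw [integral_indicator measurableSet_Icc, setIntegral_const, measureReal_def, Real.volume_Icc,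
            ENNReal.toReal_ofReal (by linarith), smul_eq_mul, mul_comm]

lemma eLpNorm_le_of_bound {g : ℝ → ℂ} {a b A : ℝ} (hA : 0 ≤ A) (hab : a ≤ b)
    (hsupp : ∀ x, x ∉ Ioo a b → g x = 0) (hbd : ∀ x, ‖g x‖ ≤ A) :
    eLpNorm g 2 volume ≤ ENNReal.ofReal (A * Real.sqrt (b - a)) := by
  have hpt : ∀ x, ‖g x‖ ≤ ‖(Ioo a b).indicator (fun _ => (A:ℂ)) x‖ := by
    intro x
    by_cases hx : x ∈ Ioo a b
    · rw [Set.indicator_of_mem hx]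
      rw [Complex.norm_real, Real.norm_eq_abs, _root_.abs_of_nonneg hA]
      exact hbd x
    · simp [hsupp x hx]
  calc eLpNorm g 2 volume ≤ eLpNorm ((Ioo a b).indicator (fun _ => (A:ℂ))) 2 volume :=
        eLpNorm_mono hpt
    _ = ‖(A:ℂ)‖₊ * (volume (Ioo a b)) ^ (1/(2:ℝ)) := by
        rw [eLpNorm_indicator_const measurableSet_Ioo two_ne_zero ENNReal.ofNat_ne_top]
        norm_num
        rw [enorm_eq_nnnorm, Complex.nnnorm_real]
    _ ≤ ENNReal.ofReal (A * Real.sqrt (b - a)) := by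
        have h1 : (volume (Ioo a b)) ^ (1/(2:ℝ)) = ENNReal.ofReal (Real.sqrt (b - a)) := by
          rw [Real.volume_Ioo, ENNReal.ofReal_rpow_of_nonneg (by linarith) (by norm_num),
            Real.sqrt_eq_rpow]
        have h2 : (‖(A:ℂ)‖₊ : ENNReal) = ENNReal.ofReal A := by
          rw [← enorm_eq_nnnorm, ← ofReal_norm_eq_enorm, Complex.norm_real, Real.norm_eq_abs,
            _root_.abs_of_nonneg hA]
        rw [h1, h2, ← ENNReal.ofReal_mul hA]
lemma int_norm_mul_le {β : ℝ → ℝ} {f : ℝ → ℂ} (hf : MemLp f 2 volume)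
    (hβc : Continuous β) (hβ01 : ∀ x, |β x| ≤ 1) {b : ℝ}
    (hβsupp : support β ⊆ Ioo (b-1) (b+1)) :
    Integrable (fun s => (β s : ℂ) * f s) ∧
      ∫ s, ‖(β s:ℂ) * f s‖ ≤ Real.sqrt 2 * (eLpNorm f 2 volume).toReal := by
  have hβm : AEStronglyMeasurable (fun s => ((β s : ℝ):ℂ)) volume :=
    (Complex.continuous_ofReal.comp hβc).aestronglyMeasurable
  have haesm : AEStronglyMeasurable (fun s => (β s:ℂ) * f s) volume := hβm.mul hf.1
  have hβ2 : eLpNorm (fun s => ((β s:ℝ):ℂ)) 2 volume ≤ ENNReal.ofReal (Real.sqrt 2) := by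
    have h := eLpNorm_le_of_bound (g := fun s => ((β s:ℝ):ℂ)) (a := b-1) (b := b+1)
      (A := 1) zero_le_one (by linarith)
      (fun x hx => by
        have hz : β x = 0 := by
          by_contra hne
          exact hx (hβsupp hne)
        simp [hz])
      (fun x => by simpa [Complex.norm_real] using hβ01 x)
    have he : (b+1) - (b-1) = 2 := by ring
    rw [he, one_mul] at h
    exact h
  have hholder : eLpNorm (fun s => (β s:ℂ) * f s) 1 volume
      ≤ eLpNorm (fun s => ((β s:ℝ):ℂ)) 2 volume * eLpNorm f 2 volume := by
    have := eLpNorm_le_eLpNorm_mul_eLpNorm'_of_norm (p := 2) (q := 2) (r := 1) hβm hf.1 (· * ·) 1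
      (Filter.Eventually.of_forall fun x => by simp)
    simpa using this
  have hfin : eLpNorm (fun s => (β s:ℂ) * f s) 1 volume < ⊤ :=
    lt_of_le_of_lt hholder (ENNReal.mul_lt_top
      (lt_of_le_of_lt hβ2 ENNReal.ofReal_lt_top) hf.2)
  have hint : Integrable (fun s => (β s:ℂ) * f s) :=
    (memLp_one_iff_integrable.mp ⟨haesm, hfin⟩)
  refine ⟨hint, ?_⟩
  have h1 : ∫ s, ‖(β s:ℂ) * f s‖ = (eLpNorm (fun s => (β s:ℂ) * f s) 1 volume).toReal := by
    rw [integral_norm_eq_lintegral_enorm haesm, eLpNorm_one_eq_lintegral_enorm]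
  rw [h1]
  have h2 : eLpNorm (fun s => (β s:ℂ) * f s) 1 volume
      ≤ ENNReal.ofReal (Real.sqrt 2) * eLpNorm f 2 volume :=
    hholder.trans (mul_le_mul_left hβ2 _)
  calc (eLpNorm (fun s => (β s:ℂ) * f s) 1 volume).toReal
      ≤ (ENNReal.ofReal (Real.sqrt 2) * eLpNorm f 2 volume).toReal :=
        ENNReal.toReal_mono (ENNReal.mul_ne_top ENNReal.ofReal_ne_top hf.2.ne) h2
    _ = Real.sqrt 2 * (eLpNorm f 2 volume).toReal := by
        rw [ENNReal.toReal_mul, ENNReal.toReal_ofReal (Real.sqrt_nonneg 2)]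
lemma prod_deriv_bound (N : ℕ) (D : ℕ → ℝ) {h : ℝ} (hh : 0 < h)
    (χ1 χ2 : ℝ → ℝ) (h1 : ContDiff ℝ (⊤:ℕ∞) χ1) (h2 : ContDiff ℝ (⊤:ℕ∞) χ2)
    (hD : ∀ m ≤ N, 0 ≤ D m)
    (hb1 : ∀ m ≤ N, ∀ x, |iteratedDeriv m χ1 x| ≤ D m / h^m)
    (hb2 : ∀ m ≤ N, ∀ x, |iteratedDeriv m χ2 x| ≤ D m / h^m) :
    ∀ t, ‖iteratedDeriv N (fun t => ((χ1 t * χ2 t : ℝ):ℂ)) t‖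
      ≤ (∑ i ∈ Finset.range (N+1), (N.choose i : ℝ) * D i * D (N-i)) / h^N := by
  intro t
  have hsmooth : ContDiff ℝ (⊤:ℕ∞) (fun t => χ1 t * χ2 t) := h1.mul h2
  rw [iteratedDeriv_ofReal' _ hsmooth]
  rw [Complex.norm_real, Real.norm_eq_abs, ← Real.norm_eq_abs,
    ← norm_iteratedFDeriv_eq_norm_iteratedDeriv]
  calc ‖iteratedFDeriv ℝ N (fun t => χ1 t * χ2 t) t‖
      ≤ ∑ i ∈ Finset.range (N+1),
          (N.choose i : ℝ) * ‖iteratedFDeriv ℝ i χ1 t‖ * ‖iteratedFDeriv ℝ (N-i) χ2 t‖ :=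
        norm_iteratedFDeriv_mul_le h1 h2 t (by exact_mod_cast le_top)
    _ ≤ ∑ i ∈ Finset.range (N+1), (N.choose i : ℝ) * D i * D (N-i) / h^N := by
        apply Finset.sum_le_sum
        intro i hi
        have hiN : i ≤ N := Nat.lt_succ_iff.mp (Finset.mem_range.mp hi)
        have e1 : ‖iteratedFDeriv ℝ i χ1 t‖ ≤ D i / h^i := by
          rw [norm_iteratedFDeriv_eq_norm_iteratedDeriv, Real.norm_eq_abs]
          exact hb1 i hiN t
        have e2 : ‖iteratedFDeriv ℝ (N-i) χ2 t‖ ≤ D (N-i) / h^(N-i) := by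
          rw [norm_iteratedFDeriv_eq_norm_iteratedDeriv, Real.norm_eq_abs]
          exact hb2 (N-i) (Nat.sub_le N i) t
        have hpow : h^i * h^(N-i) = h^N := by
          rw [← pow_add]
          congr 1
          omega
        have hc : (0:ℝ) ≤ (N.choose i : ℝ) := by positivity
        calc (N.choose i : ℝ) * ‖iteratedFDeriv ℝ i χ1 t‖ * ‖iteratedFDeriv ℝ (N-i) χ2 t‖
            ≤ (N.choose i : ℝ) * (D i / h^i) * (D (N-i) / h^(N-i)) := by
              have hD1 : 0 ≤ D i / h ^ i := div_nonneg (hD i hiN) (by positivity)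
              apply mul_le_mul
              · exact mul_le_mul_of_nonneg_left e1 hc
              · exact e2
              · exact norm_nonneg _
              · positivity
          _ = (N.choose i : ℝ) * D i * D (N-i) / h^N := by
              calc (N.choose i : ℝ) * (D i / h^i) * (D (N-i) / h^(N-i))
                  = ((N.choose i : ℝ) * D i * D (N-i)) * ((h^i)⁻¹ * (h^(N-i))⁻¹) := by ring
                _ = ((N.choose i : ℝ) * D i * D (N-i)) * (h^N)⁻¹ := by rw [← mul_inv, hpow]
                _ = (N.choose i : ℝ) * D i * D (N-i) / h^N := by rw [div_eq_mul_inv]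
    _ = (∑ i ∈ Finset.range (N+1), (N.choose i : ℝ) * D i * D (N-i)) / h^N := by
        rw [Finset.sum_div]
lemma msupp_lemma {m : ℝ → ℝ} {a : ℝ} (hsupp : support m ⊆ Ioo (a-1) (a+1)) :
    HasCompactSupport (fun t => ((m t : ℝ):ℂ)) ∧
      tsupport (fun t => ((m t : ℝ):ℂ)) ⊆ Icc (a-1) (a+1) := by
  have hsupp2 : support (fun t => ((m t : ℝ):ℂ)) ⊆ Ioo (a-1) (a+1) := by
    intro x hx
    apply hsupp
    simpa [Function.mem_support, Complex.ofReal_eq_zero] using hx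
  have hts : tsupport (fun t => ((m t : ℝ):ℂ)) ⊆ Icc (a-1) (a+1) :=
    closure_minimal (hsupp2.trans Ioo_subset_Icc_self) isClosed_Icc
  exact ⟨HasCompactSupport.of_support_subset_isCompact isCompact_Icc
    (hsupp2.trans Ioo_subset_Icc_self), hts⟩

lemma ker_est {h l : ℝ} (hh : 0 < h) (N : ℕ) {m : ℝ → ℝ} (hmc : ContDiff ℝ (⊤:ℕ∞) m) {a : ℝ}
    (hsupp : support m ⊆ Ioo (a-1) (a+1)) {B : ℝ} (hB : 0 ≤ B)
    (hbd : ∀ t, ‖iteratedDeriv N (fun t => ((m t:ℝ):ℂ)) t‖ ≤ B / h^N)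
    (hl : l ≠ 0) :
    ‖∫ t : ℝ, Complex.exp ((↑(l*t)) * Complex.I) * ((m t:ℝ):ℂ)‖
      ≤ (|l|⁻¹)^N * (B/h^N * 2) := by
  obtain ⟨hcs, hts⟩ := msupp_lemma hsupp
  have hmC : ContDiff ℝ (⊤:ℕ∞) (fun t => ((m t:ℝ):ℂ)) :=
    Complex.ofRealCLM.contDiff.comp hmc
  refine (osc_bound _ hmC hcs hl N).trans ?_
  apply mul_le_mul_of_nonneg_left _ (by positivity)
  have := integral_norm_le_of_support_subset
    (u := iteratedDeriv N (fun t => ((m t:ℝ):ℂ)))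
    (((contDiff_iteratedDeriv' _ hmC N).continuous).integrable_of_hasCompactSupport
      (hcs_iteratedDeriv hcs N))
    (S := B/h^N) (by positivity) (by linarith)
    ((support_iteratedDeriv_subset _ N).trans hts) hbd
  calc ∫ t, ‖iteratedDeriv N (fun t => ((m t:ℝ):ℂ)) t‖ ≤ B/h^N * ((a+1) - (a-1)) := this
    _ = B/h^N * 2 := by ring_nf

lemma ker_triv {m : ℝ → ℝ} (hmc : Continuous m) {a : ℝ}
    (hsupp : support m ⊆ Ioo (a-1) (a+1)) (hm1 : ∀ t, |m t| ≤ 1) (l : ℝ) :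
    ‖∫ t : ℝ, Complex.exp ((↑(l*t)) * Complex.I) * ((m t:ℝ):ℂ)‖ ≤ 2 := by
  obtain ⟨hcs, hts⟩ := msupp_lemma hsupp
  set u : ℝ → ℂ := fun t => Complex.exp ((↑(l*t)) * Complex.I) * ((m t:ℝ):ℂ) with hu
  have hucont : Continuous u := by fun_prop
  have hucs : HasCompactSupport u := hcs.mul_left
  have huint : Integrable u := hucont.integrable_of_hasCompactSupport hucs
  have hbd : ∀ t, ‖u t‖ ≤ 1 := by
    intro t
    rw [hu]
    simp only [norm_mul]
    have h1 : ‖Complex.exp ((↑(l*t)) * Complex.I)‖ = 1 := by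
      simpa using Complex.norm_exp_ofReal_mul_I (l*t)
    rw [h1, one_mul, Complex.norm_real, Real.norm_eq_abs]
    exact hm1 t
  have hsu : support u ⊆ Icc (a-1) (a+1) := by
    intro x hx
    have hmx : m x ≠ 0 := by
      intro hz
      apply hx
      simp [hu, hz]
    exact Ioo_subset_Icc_self (hsupp hmx)
  calc ‖∫ t, u t‖ ≤ ∫ t, ‖u t‖ := norm_integral_le_integral_norm _
    _ ≤ 1 * ((a+1) - (a-1)) :=
        integral_norm_le_of_support_subset huint zero_le_one (by linarith) hsu hbd
    _ = 2 := by ring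
lemma core {h : ℝ} (hh : 0 < h) (ε : ℝ)
    (p b : ℝ) (α m β : ℝ → ℝ) (f : ℝ → ℂ)
    (hf : MemLp f 2 volume) (hfm : StronglyMeasurable f)
    (hmc : ContDiff ℝ (⊤:ℕ∞) m) (hmsupp : HasCompactSupport m)
    (hα1 : ∀ x, |α x| ≤ 1) (hαsupp : ∀ x, x ∉ Ioo (p-1) (p+1) → α x = 0)
    (hβc : Continuous β) (hβ1 : ∀ x, |β x| ≤ 1)
    (hβsupp : support β ⊆ Ioo (b-1) (b+1))
    (K₀ : ℝ) (hK₀ : 0 ≤ K₀)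
    (hker : ∀ x s : ℝ, α x ≠ 0 → β s ≠ 0 →
       ‖∫ t : ℝ, Complex.exp ((↑(ε*(s-x)/h*t)) * Complex.I) * ((m t : ℝ):ℂ)‖ ≤ K₀) :
    eLpNorm (fun x => (α x : ℂ) * ((Real.sqrt (2*Real.pi*h))⁻¹ •
        ∫ t : ℝ, Complex.exp ((↑(-(ε*t*x)/h)) * Complex.I) *
          (((m t:ℝ):ℂ) * ((Real.sqrt (2*Real.pi*h))⁻¹ •
            ∫ s : ℝ, Complex.exp ((↑(ε*t*s/h)) * Complex.I) * ((β s:ℂ) * f s))))) 2 volume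
      ≤ ENNReal.ofReal (K₀ / (Real.pi*h) * ((eLpNorm f 2 volume).toReal)) := by
  set c : ℝ := Real.sqrt (2*Real.pi*h) with hc_def
  have hπ : (0:ℝ) < Real.pi := Real.pi_pos
  have hc : 0 < c := Real.sqrt_pos.mpr (by positivity)
  have hcc : c * c = 2*Real.pi*h := Real.mul_self_sqrt (by positivity)
  obtain ⟨hβfint, hβfCS⟩ := int_norm_mul_le hf hβc hβ1 hβsupp
  set Jf : ℝ := (eLpNorm f 2 volume).toReal with hJf_def
  have hJf0 : 0 ≤ Jf := ENNReal.toReal_nonneg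
  set A : ℝ := c⁻¹ * (c⁻¹ * (K₀ * (Real.sqrt 2 * Jf))) with hA_def
  have hA0 : 0 ≤ A := by positivity
  set g : ℝ → ℂ := fun x => (α x : ℂ) * ((c:ℝ)⁻¹ •
        ∫ t : ℝ, Complex.exp ((↑(-(ε*t*x)/h)) * Complex.I) *
          (((m t:ℝ):ℂ) * ((c:ℝ)⁻¹ •
            ∫ s : ℝ, Complex.exp ((↑(ε*t*s/h)) * Complex.I) * ((β s:ℂ) * f s)))) with hg_def
  have hmcont0 : Continuous m := hmc.continuous
  have hmcont : Continuous (fun t => ((m t:ℝ):ℂ)) := Complex.continuous_ofReal.comp hmcont0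
  have hmcs : HasCompactSupport (fun t => ((m t:ℝ):ℂ)) := by
    apply HasCompactSupport.comp_left hmsupp Complex.ofReal_zero
  have hmint : Integrable (fun t => ((m t:ℝ):ℂ)) :=
    hmcont.integrable_of_hasCompactSupport hmcs
  -- pointwise bound
  have key : ∀ x, ‖g x‖ ≤ A := by
    intro x
    by_cases hαx : α x = 0
    · have hz : g x = 0 := by simp [hg_def, hαx]
      rw [hz, norm_zero]; exact hA0
    · -- the two-variable integrand
      set Hf : ℝ → ℝ → ℂ := fun t s =>
        Complex.exp ((↑(-(ε*t*x)/h)) * Complex.I) *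
          (((m t:ℝ):ℂ) * (Complex.exp ((↑(ε*t*s/h)) * Complex.I) * ((β s:ℂ) * f s))) with hHf_def
      have hHint : Integrable (uncurry Hf) ((volume : Measure ℝ).prod volume) := by
        have hsm : AEStronglyMeasurable (uncurry Hf) ((volume : Measure ℝ).prod volume) := by
          apply StronglyMeasurable.aestronglyMeasurable
          apply StronglyMeasurable.mul
          · exact (Continuous.stronglyMeasurable (by fun_prop))
          apply StronglyMeasurable.mul
          · exact ((hmcont.comp continuous_fst).stronglyMeasurable)
          apply StronglyMeasurable.mul
          · exact (Continuous.stronglyMeasurable (by fun_prop))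
          apply StronglyMeasurable.mul
          · exact (Continuous.stronglyMeasurable (by fun_prop))
          · exact hfm.comp_measurable measurable_snd
        have hdom : Integrable (fun q : ℝ × ℝ => ‖((m q.1 : ℝ):ℂ)‖ * ‖(β q.2:ℂ) * f q.2‖)
            ((volume : Measure ℝ).prod volume) := hmint.norm.mul_prod hβfint.norm
        apply Integrable.mono' hdom hsm
        apply Filter.Eventually.of_forall
        rintro ⟨t, s⟩
        have e1 : ‖Complex.exp ((↑(-(ε*t*x)/h)) * Complex.I)‖ = 1 :=
          Complex.norm_exp_ofReal_mul_I _
        have e2 : ‖Complex.exp ((↑(ε*t*s/h)) * Complex.I)‖ = 1 :=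
          Complex.norm_exp_ofReal_mul_I _
        show ‖Hf t s‖ ≤ ‖((m t : ℝ):ℂ)‖ * ‖(β s:ℂ) * f s‖
        rw [hHf_def]
        rw [norm_mul, e1, one_mul, norm_mul, norm_mul, e2, one_mul]
      set K : ℝ → ℂ := fun s => ∫ t : ℝ, Complex.exp ((↑(ε*(s-x)/h*t)) * Complex.I) * ((m t : ℝ):ℂ)
        with hK_def
      -- inner collapse : for each s, ∫ t, Hf t s = K s * (β s * f s)
      have hcollapse : ∀ s : ℝ, ∫ t : ℝ, Hf t s = K s * ((β s:ℂ) * f s) := by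
        intro s
        rw [hK_def, ← integral_mul_const]
        congr 1
        funext t
        rw [hHf_def]
        have hexp : Complex.exp ((↑(-(ε*t*x)/h)) * Complex.I) *
            Complex.exp ((↑(ε*t*s/h)) * Complex.I)
            = Complex.exp ((↑(ε*(s-x)/h*t)) * Complex.I) := by
          rw [← Complex.exp_add]
          congr 1
          push_cast
          ring
        calc Complex.exp ((↑(-(ε*t*x)/h)) * Complex.I) *
            (((m t:ℝ):ℂ) * (Complex.exp ((↑(ε*t*s/h)) * Complex.I) * ((β s:ℂ) * f s)))
            = (Complex.exp ((↑(-(ε*t*x)/h)) * Complex.I) *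
                Complex.exp ((↑(ε*t*s/h)) * Complex.I)) * ((m t:ℝ):ℂ) * ((β s:ℂ) * f s) := by
              ring
          _ = Complex.exp ((↑(ε*(s-x)/h*t)) * Complex.I) * ((m t:ℝ):ℂ) * ((β s:ℂ) * f s) := by
              rw [hexp]
      -- rewrite g x
      have hgx : g x = (α x : ℂ) * ((c:ℝ)⁻¹ • ((c:ℝ)⁻¹ •
          ∫ s : ℝ, K s * ((β s:ℂ) * f s))) := by
        simp only [hg_def]
        congr 1
        have step1 : (fun t : ℝ => Complex.exp ((↑(-(ε*t*x)/h)) * Complex.I) *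
            (((m t:ℝ):ℂ) * ((c:ℝ)⁻¹ •
              ∫ s : ℝ, Complex.exp ((↑(ε*t*s/h)) * Complex.I) * ((β s:ℂ) * f s))))
            = fun t : ℝ => (c:ℝ)⁻¹ • ∫ s : ℝ, Hf t s := by
          funext t
          rw [mul_smul_comm, mul_smul_comm]
          congr 1
          rw [← integral_const_mul, ← integral_const_mul]
        rw [step1, integral_smul]
        congr 1
        rw [MeasureTheory.integral_integral_swap hHint]
        rw [show (fun s => ∫ t : ℝ, Hf t s) = (fun s => K s * ((β s:ℂ) * f s)) from
          funext hcollapse]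
      -- integrability of s ↦ K s * βf s
      have hKint : Integrable (fun s => K s * ((β s:ℂ) * f s)) := by
        have := hHint.integral_prod_right
        apply this.congr
        apply Filter.Eventually.of_forall
        intro s
        exact hcollapse s
      -- bound
      have hnormint : ‖∫ s : ℝ, K s * ((β s:ℂ) * f s)‖ ≤ K₀ * ∫ s, ‖(β s:ℂ) * f s‖ := by
        calc ‖∫ s : ℝ, K s * ((β s:ℂ) * f s)‖ ≤ ∫ s, ‖K s * ((β s:ℂ) * f s)‖ :=
              norm_integral_le_integral_norm _
          _ ≤ ∫ s, K₀ * ‖(β s:ℂ) * f s‖ := by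
              apply integral_mono hKint.norm (hβfint.norm.const_mul K₀)
              intro s
              dsimp only
              by_cases hβs : β s = 0
              · simp [hβs]
              · rw [norm_mul]
                apply mul_le_mul_of_nonneg_right (hker x s hαx hβs) (norm_nonneg _)
          _ = K₀ * ∫ s, ‖(β s:ℂ) * f s‖ := integral_const_mul _ _
      rw [hgx]
      rw [norm_mul, norm_smul, norm_smul, Real.norm_eq_abs,
        _root_.abs_of_nonneg (le_of_lt (inv_pos.mpr hc)), Complex.norm_real, Real.norm_eq_abs]
      calc |α x| * (c⁻¹ * (c⁻¹ * ‖∫ s : ℝ, K s * ((β s:ℂ) * f s)‖))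
          ≤ 1 * (c⁻¹ * (c⁻¹ * (K₀ * (Real.sqrt 2 * Jf)))) := by
            apply mul_le_mul (hα1 x)
            · apply mul_le_mul_of_nonneg_left _ (le_of_lt (inv_pos.mpr hc))
              apply mul_le_mul_of_nonneg_left _ (le_of_lt (inv_pos.mpr hc))
              exact hnormint.trans (mul_le_mul_of_nonneg_left hβfCS hK₀)
            · positivity
            · exact zero_le_one
        _ = A := by rw [one_mul, hA_def]
  -- support of g
  have hgsupp : ∀ x, x ∉ Ioo (p-1) (p+1) → g x = 0 := by
    intro x hx
    rw [hg_def]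
    simp [hαsupp x hx]
  have := eLpNorm_le_of_bound hA0 (by linarith : p-1 ≤ p+1) hgsupp key
  refine this.trans (ENNReal.ofReal_le_ofReal (le_of_eq ?_))
  have h2 : Real.sqrt 2 * Real.sqrt 2 = 2 := Real.mul_self_sqrt (by norm_num)
  have hlen : (p+1) - (p-1) = 2 := by ring
  rw [hlen]
  have hcne : c ≠ 0 := ne_of_gt hc
  have expand : A * Real.sqrt 2 = (K₀*Jf)*(Real.sqrt 2 * Real.sqrt 2) * (c⁻¹*c⁻¹) := by
    rw [hA_def]; ring
  rw [expand, h2, ← mul_inv, hcc]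
  field_simp
lemma half (N : ℕ) (B : ℝ) (hB : 1 ≤ B) {h : ℝ} (hh : 0 < h) (ε : ℝ) (hε : |ε| = 1)
    (p b : ℤ) (a : ℝ) (α m β : ℝ → ℝ) (f : ℝ → ℂ)
    (hf : MemLp f 2 volume) (hfm : StronglyMeasurable f)
    (hmc : ContDiff ℝ (⊤:ℕ∞) m)
    (hm1 : ∀ t, |m t| ≤ 1)
    (hmsupp : support m ⊆ Ioo (a-1) (a+1))
    (hmbd : ∀ t, ‖iteratedDeriv N (fun t => ((m t:ℝ):ℂ)) t‖ ≤ B / h^N)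
    (hα1 : ∀ x, |α x| ≤ 1) (hαsupp : support α ⊆ Ioo ((p:ℝ)-1) ((p:ℝ)+1))
    (hβc : Continuous β) (hβ1 : ∀ x, |β x| ≤ 1)
    (hβsupp : support β ⊆ Ioo ((b:ℝ)-1) ((b:ℝ)+1))
    (e : ℝ) (he0 : 0 ≤ e) (he1 : e ≤ 1) :
    eLpNorm (fun x => (α x : ℂ) * ((Real.sqrt (2*Real.pi*h))⁻¹ •
        ∫ t : ℝ, Complex.exp ((↑(-(ε*t*x)/h)) * Complex.I) *
          (((m t:ℝ):ℂ) * ((Real.sqrt (2*Real.pi*h))⁻¹ •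
            ∫ s : ℝ, Complex.exp ((↑(ε*t*s/h)) * Complex.I) * ((β s:ℂ) * f s))))) 2 volume
      ≤ ENNReal.ofReal ((2*B+2)*5^N / (h * (1 + |(p:ℝ)-(b:ℝ)| + e)^N))
          * eLpNorm f 2 volume := by
  have hπ : (0:ℝ) < Real.pi := Real.pi_pos
  have hπ1 : (1:ℝ) ≤ Real.pi := by nlinarith [Real.pi_gt_three]
  set dpb : ℝ := |(p:ℝ)-(b:ℝ)| with hdpb_def
  have hdpb0 : 0 ≤ dpb := abs_nonneg _
  set d : ℝ := 1 + dpb + e with hd_def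
  have hd1 : (1:ℝ) ≤ d := by simp only [hd_def]; linarith
  have hd0 : (0:ℝ) ≤ d := by linarith
  set C0 : ℝ := (2*B+2)*5^N with hC0_def
  have hC0pos : 0 < C0 := by positivity
  set Jf : ℝ := (eLpNorm f 2 volume).toReal with hJf_def
  have hJf0 : 0 ≤ Jf := ENNReal.toReal_nonneg
  have hEf : eLpNorm f 2 volume = ENNReal.ofReal Jf := (ENNReal.ofReal_toReal hf.2.ne).symm
  have hα0 : ∀ x, x ∉ Ioo ((p:ℝ)-1) ((p:ℝ)+1) → α x = 0 := by
    intro x hx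
    by_contra hne
    exact hx (hαsupp hne)
  have hmCS : HasCompactSupport m :=
    HasCompactSupport.of_support_subset_isCompact isCompact_Icc
      (hmsupp.trans Ioo_subset_Icc_self)
  -- common final step
  have final : ∀ K₀ : ℝ, 0 ≤ K₀ → K₀ * d^N ≤ Real.pi * C0 →
      ENNReal.ofReal (K₀ / (Real.pi*h) * Jf)
        ≤ ENNReal.ofReal (C0 / (h * d^N)) * eLpNorm f 2 volume := by
    intro K₀ hK₀ hineq
    rw [hEf, ← ENNReal.ofReal_mul (by positivity)]
    apply ENNReal.ofReal_le_ofReal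
    apply mul_le_mul_of_nonneg_right _ hJf0
    rw [div_le_div_iff₀ (by positivity) (by positivity)]
    calc K₀ * (h * d^N) = (K₀ * d^N) * h := by ring
      _ ≤ (Real.pi * C0) * h := mul_le_mul_of_nonneg_right hineq (le_of_lt hh)
      _ = C0 * (Real.pi * h) := by ring
  by_cases hD : dpb ≤ 3
  · -- trivial kernel bound
    have hker : ∀ x s : ℝ, α x ≠ 0 → β s ≠ 0 →
        ‖∫ t : ℝ, Complex.exp ((↑(ε*(s-x)/h*t)) * Complex.I) * ((m t : ℝ):ℂ)‖ ≤ 2 := by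
      intro x s _ _
      exact ker_triv hmc.continuous hmsupp hm1 (ε*(s-x)/h)
    refine (core hh ε _ _ α m β f hf hfm hmc hmCS hα1 hα0 hβc hβ1 hβsupp 2 (by norm_num)
      hker).trans (final 2 (by norm_num) ?_)
    have hd5 : d ≤ 5 := by simp only [hd_def]; linarith
    have hdN : d^N ≤ 5^N := pow_le_pow_left₀ hd0 hd5 N
    have h5N : (0:ℝ) < 5^N := by positivity
    calc (2:ℝ) * d^N ≤ 2 * 5^N := by linarith
      _ ≤ C0 := by rw [hC0_def]; nlinarith
      _ ≤ Real.pi * C0 := le_mul_of_one_le_left (le_of_lt hC0pos) hπ1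
  · -- oscillatory kernel bound
    push_neg at hD
    have hdpb4 : (4:ℝ) ≤ dpb := by
      have : dpb = |((p - b : ℤ) : ℝ)| := by rw [hdpb_def]; push_cast; ring_nf
      rw [this] at hD ⊢
      rw [← Int.cast_abs] at hD ⊢
      have : (3:ℤ) < |p - b| := by exact_mod_cast hD
      exact_mod_cast this
    have hdpb2 : (2:ℝ) ≤ dpb - 2 := by linarith
    set K₀ : ℝ := 2*B*((dpb-2)⁻¹)^N with hK₀_def
    have hK₀0 : 0 ≤ K₀ := by positivity
    have hker : ∀ x s : ℝ, α x ≠ 0 → β s ≠ 0 →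
        ‖∫ t : ℝ, Complex.exp ((↑(ε*(s-x)/h*t)) * Complex.I) * ((m t : ℝ):ℂ)‖ ≤ K₀ := by
      intro x s hx hs
      have hxmem : x ∈ Ioo ((p:ℝ)-1) ((p:ℝ)+1) := hαsupp hx
      have hsmem : s ∈ Ioo ((b:ℝ)-1) ((b:ℝ)+1) := hβsupp hs
      have hxp : |x - (p:ℝ)| < 1 := by
        rw [abs_lt]; constructor <;> [linarith [hxmem.1]; linarith [hxmem.2]]
      have hsb : |s - (b:ℝ)| < 1 := by
        rw [abs_lt]; constructor <;> [linarith [hsmem.1]; linarith [hsmem.2]]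
      have hsx : dpb - 2 ≤ |s - x| := by
        have htri : dpb ≤ |x - (p:ℝ)| + |s - x| + |s - (b:ℝ)| := by
          rw [hdpb_def]
          calc |(p:ℝ) - b| = |((p:ℝ) - x) + (x - s) + (s - (b:ℝ))| := by ring_nf
            _ ≤ |(p:ℝ) - x| + |x - s| + |s - (b:ℝ)| := by
                refine (abs_add_three _ _ _).trans ?_
                exact le_refl _
            _ = |x - (p:ℝ)| + |s - x| + |s - (b:ℝ)| := by rw [abs_sub_comm (p:ℝ) x,
                abs_sub_comm x s]
        linarith
      have hsxpos : (0:ℝ) < |s - x| := by linarith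
      set l : ℝ := ε*(s-x)/h with hl_def
      have hlabs : |l| = |s - x| / h := by
        rw [hl_def, abs_div, abs_mul, hε, one_mul, abs_of_pos hh]
      have hl0 : l ≠ 0 := by
        apply abs_pos.mp
        rw [hlabs]
        exact div_pos hsxpos hh
      have hkest := ker_est hh N hmc hmsupp (by linarith : (0:ℝ) ≤ B) hmbd hl0
      refine hkest.trans ?_
      have hinv : |l|⁻¹ ≤ h / (dpb - 2) := by
        rw [hlabs, inv_div]
        apply div_le_div_of_nonneg_left (le_of_lt hh) (by linarith) hsx
      have hinv0 : 0 ≤ |l|⁻¹ := by positivity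
      have hpow : (|l|⁻¹)^N ≤ (h / (dpb-2))^N := pow_le_pow_left₀ hinv0 hinv N
      have hfact : (0:ℝ) ≤ B/h^N * 2 := by positivity
      calc (|l|⁻¹)^N * (B/h^N * 2) ≤ (h/(dpb-2))^N * (B/h^N * 2) :=
            mul_le_mul_of_nonneg_right hpow hfact
        _ = K₀ := by
            rw [hK₀_def, div_pow, inv_pow]
            field_simp
    refine (core hh ε _ _ α m β f hf hfm hmc hmCS hα1 hα0 hβc hβ1 hβsupp K₀ hK₀0
      hker).trans (final K₀ hK₀0 ?_)
    have hd4 : d ≤ 4*(dpb-2) := by simp only [hd_def]; linarith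
    have hdN : d^N ≤ (4*(dpb-2))^N := pow_le_pow_left₀ hd0 hd4 N
    have hcancel : ((dpb-2)⁻¹)^N * (dpb-2)^N = 1 := by
      rw [← mul_pow, inv_mul_cancel₀ (by linarith : dpb - 2 ≠ 0), one_pow]
    calc K₀ * d^N ≤ K₀ * (4*(dpb-2))^N := by
          apply mul_le_mul_of_nonneg_left hdN hK₀0
      _ = 2*B*4^N * (((dpb-2)⁻¹)^N * (dpb-2)^N) := by rw [hK₀_def, mul_pow]; ring
      _ = 2*B*4^N := by rw [hcancel, mul_one]
      _ ≤ C0 := by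
          rw [hC0_def]
          have h45 : (4:ℝ)^N ≤ 5^N := pow_le_pow_left₀ (by norm_num) (by norm_num) N
          nlinarith [pow_pos (show (0:ℝ) < 4 by norm_num) N]
      _ ≤ Real.pi * C0 := le_mul_of_one_le_left (le_of_lt hC0pos) hπ1

lemma persEq1 (h t s c : ℝ) (v v' : ℂ) (hv : v = v') :
    Complex.exp (Complex.I * (t:ℂ) * (s:ℂ) / (h:ℂ)) * ((c:ℂ) * v)
      = Complex.exp ((↑((1:ℝ)*t*s/h)) * Complex.I) * ((c:ℂ) * v') := by
  subst hv
  rw [show Complex.I * (t:ℂ) * (s:ℂ) / (h:ℂ) = ((↑((1:ℝ)*t*s/h)) * Complex.I) from by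
    push_cast; ring]

lemma pertEq1 (h t x c1 c2 : ℝ) (S S' : ℂ) (hS : S = S') :
    Complex.exp (-Complex.I * (t:ℂ) * (x:ℂ) / (h:ℂ)) * ((c1:ℂ) * (c2:ℂ) * S)
      = Complex.exp ((↑(-((1:ℝ)*t*x)/h)) * Complex.I) * (((c1*c2 : ℝ):ℂ) * S') := by
  subst hS
  rw [show -Complex.I * (t:ℂ) * (x:ℂ) / (h:ℂ) = ((↑(-((1:ℝ)*t*x)/h)) * Complex.I) from by
    push_cast; ring]
  push_cast
  ring

lemma persEq2 (h t s c : ℝ) (v v' : ℂ) (hv : v = v') :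
    Complex.exp (-Complex.I * (s:ℂ) * (t:ℂ) / (h:ℂ)) * ((c:ℂ) * v)
      = Complex.exp ((↑((-1:ℝ)*t*s/h)) * Complex.I) * ((c:ℂ) * v') := by
  subst hv
  rw [show -Complex.I * (s:ℂ) * (t:ℂ) / (h:ℂ) = ((↑((-1:ℝ)*t*s/h)) * Complex.I) from by
    push_cast; ring]

lemma pertEq2 (h t x c1 c2 : ℝ) (S S' : ℂ) (hS : S = S') :
    Complex.exp (Complex.I * (x:ℂ) * (t:ℂ) / (h:ℂ)) * ((c1:ℂ) * (c2:ℂ) * S)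
      = Complex.exp ((↑(-((-1:ℝ)*t*x)/h)) * Complex.I) * (((c1*c2 : ℝ):ℂ) * S') := by
  subst hS
  rw [show Complex.I * (x:ℂ) * (t:ℂ) / (h:ℂ) = ((↑(-((-1:ℝ)*t*x)/h)) * Complex.I) from by
    push_cast; ring]
  push_cast
  ring


end AOrth

set_option maxHeartbeats 1600000 in
/-- **Almost orthogonality of the pieces `A_{jk} = χ_j⁻ F_h χ_k⁺`.**
Given `N` and constants `D₀, …, D_N > 0`, there is `C′_N` such that for all
`h ∈ (0,1]`, all families `(χ_j⁻)_{j∈ℤ}`, `(χ_k⁺)_{k∈ℤ}` of smooth functions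
`ℝ → [0,1]` with `supp χ_j⁻ ⊆ (j−1,j+1)`, `supp χ_k⁺ ⊆ (k−1,k+1)` and
`sup|∂^m χ| ≤ D_m h^{−m}` for `m ≤ N`, the operators `A_{jk} := χ_j⁻ F_h χ_k⁺`
satisfy `‖A_{jk} A_{j′k′}^*‖ ≤ C′_N h^{−1}(1+|j−j′|+|k−k′|)^{−N}` and
`‖A_{j′k′}^* A_{jk}‖ ≤ C′_N h^{−1}(1+|j−j′|+|k−k′|)^{−N}`.
(The compositions `A_{jk}A_{j′k′}^* = χ_j⁻ F_h χ_k⁺ χ_{k′}⁺ F_h^{-1} χ_{j′}⁻` and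
`A_{j′k′}^* A_{jk} = χ_{k′}⁺ F_h^{-1} χ_{j′}⁻ χ_j⁻ F_h χ_k⁺` are written out
pointwise, and the operator norms are stated by testing on `L²`.) -/
theorem stmt4 :
    ∀ (N : ℕ) (D : ℕ → ℝ), (∀ m ≤ N, 0 < D m) →
    ∃ C > 0, ∀ h : ℝ, 0 < h → h ≤ 1 →
    ∀ χm χp : ℤ → ℝ → ℝ,
      (∀ j, ContDiff ℝ (⊤ : ℕ∞) (χm j)) →
      (∀ k, ContDiff ℝ (⊤ : ℕ∞) (χp k)) →
      (∀ j x, χm j x ∈ Set.Icc (0 : ℝ) 1) →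
      (∀ k x, χp k x ∈ Set.Icc (0 : ℝ) 1) →
      (∀ j, Function.support (χm j) ⊆ Set.Ioo ((j : ℝ) - 1) ((j : ℝ) + 1)) →
      (∀ k, Function.support (χp k) ⊆ Set.Ioo ((k : ℝ) - 1) ((k : ℝ) + 1)) →
      (∀ j, ∀ m ≤ N, ∀ x, |iteratedDeriv m (χm j) x| ≤ D m / h ^ m) →
      (∀ k, ∀ m ≤ N, ∀ x, |iteratedDeriv m (χp k) x| ≤ D m / h ^ m) →
    ∀ (j j' k k' : ℤ) (f : ℝ → ℂ), MemLp f 2 →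
      (eLpNorm (fun x => (χm j x : ℂ) *
          semiFT h (fun t => (χp k t : ℂ) * (χp k' t : ℂ) *
            semiFTinv h (fun s => (χm j' s : ℂ) * f s) t) x) 2 volume ≤
        ENNReal.ofReal
          (C / (h * (1 + |(j : ℝ) - (j' : ℝ)| + |(k : ℝ) - (k' : ℝ)|) ^ N)) *
          eLpNorm f 2 volume) ∧
      (eLpNorm (fun x => (χp k' x : ℂ) *
          semiFTinv h (fun t => (χm j' t : ℂ) * (χm j t : ℂ) *
            semiFT h (fun s => (χp k s : ℂ) * f s) t) x) 2 volume ≤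
        ENNReal.ofReal
          (C / (h * (1 + |(j : ℝ) - (j' : ℝ)| + |(k : ℝ) - (k' : ℝ)|) ^ N)) *
          eLpNorm f 2 volume) := by
  intro N D hD
  set B : ℝ := max 1 (∑ i ∈ Finset.range (N+1), (N.choose i : ℝ) * D i * D (N-i)) with hB_def
  have hB1 : (1:ℝ) ≤ B := le_max_left _ _
  refine ⟨(2*B+2)*5^N, by positivity, ?_⟩
  intro h hh hh1 χm χp hχmC hχpC hχm01 hχp01 hχmsupp hχpsupp hχmD hχpD j j' k k' f hf
  -- measurable representative
  set f' : ℝ → ℂ := hf.1.mk f with hf'_def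
  have hff' : f =ᵐ[volume] f' := hf.1.ae_eq_mk
  have hf'sm : StronglyMeasurable f' := hf.1.stronglyMeasurable_mk
  have hf' : MemLp f' 2 volume := ⟨hf'sm.aestronglyMeasurable,
    by rw [← eLpNorm_congr_ae hff']; exact hf.2⟩
  have hE : eLpNorm f 2 volume = eLpNorm f' 2 volume := eLpNorm_congr_ae hff'
  clear_value f'
  -- basic bounds for the cutoffs
  have habs_m : ∀ (i : ℤ) (x : ℝ), |χm i x| ≤ 1 := by
    intro i x
    rcases hχm01 i x with ⟨h0, h1⟩
    rw [_root_.abs_of_nonneg h0]; exact h1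
  have habs_p : ∀ (i : ℤ) (x : ℝ), |χp i x| ≤ 1 := by
    intro i x
    rcases hχp01 i x with ⟨h0, h1⟩
    rw [_root_.abs_of_nonneg h0]; exact h1
  have hDnn : ∀ m ≤ N, 0 ≤ D m := fun m hm => (hD m hm).le
  have hSB : (∑ i ∈ Finset.range (N+1), (N.choose i : ℝ) * D i * D (N-i)) ≤ B :=
    le_max_right _ _
  have hpowh : (0:ℝ) < h^N := by positivity
  constructor
  · -- first estimate
    by_cases hkk : 2 ≤ |k - k'|
    · -- middle cutoffs have disjoint supports
      have hzero : ∀ t : ℝ, (χp k t : ℂ) * (χp k' t : ℂ) = 0 := by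
        intro t
        have : χp k t = 0 ∨ χp k' t = 0 := by
          by_contra hcon
          push_neg at hcon
          have h1 := hχpsupp k hcon.1
          have h2 := hχpsupp k' hcon.2
          have hlt : |(k:ℝ) - (k':ℝ)| < 2 := by
            rw [abs_lt]
            constructor <;> linarith [h1.1, h1.2, h2.1, h2.2]
          have hge : (2:ℝ) ≤ |(k:ℝ) - (k':ℝ)| := by
            have : ((2:ℤ):ℝ) ≤ (|k - k'| : ℤ) := by exact_mod_cast hkk
            rw [Int.cast_abs] at this
            push_cast at this ⊢
            linarith
          linarith
        rcases this with hz | hz <;> simp [hz]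
      have hfn0 : (fun x => (χm j x : ℂ) *
          semiFT h (fun t => (χp k t : ℂ) * (χp k' t : ℂ) *
            semiFTinv h (fun s => (χm j' s : ℂ) * f s) t) x) = (fun _ => (0:ℂ)) := by
        funext x
        simp [semiFT, hzero]
      rw [hfn0, eLpNorm_zero']
      exact zero_le
    · push_neg at hkk
      have hkk' : |(k:ℝ) - (k':ℝ)| ≤ 1 := by
        have : (|k - k'| : ℤ) ≤ 1 := by omega
        have : ((|k - k'| : ℤ) : ℝ) ≤ 1 := by exact_mod_cast this
        rw [Int.cast_abs] at this
        push_cast at this ⊢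
        linarith
      -- rewrite into the `half` form
      have heq : (fun x => (χm j x : ℂ) *
          semiFT h (fun t => (χp k t : ℂ) * (χp k' t : ℂ) *
            semiFTinv h (fun s => (χm j' s : ℂ) * f s) t) x)
          = (fun x => ((χm j x : ℝ):ℂ) * ((Real.sqrt (2*Real.pi*h))⁻¹ •
            ∫ t : ℝ, Complex.exp ((↑(-((1:ℝ)*t*x)/h)) * Complex.I) *
              (((χp k t * χp k' t : ℝ):ℂ) * ((Real.sqrt (2*Real.pi*h))⁻¹ •
                ∫ s : ℝ, Complex.exp ((↑((1:ℝ)*t*s/h)) * Complex.I)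
                  * ((χm j' s:ℂ) * f' s))))) := by
        funext x
        simp only [semiFT, semiFTinv]
        refine congrArg (fun z : ℂ => ((χm j x : ℝ):ℂ) * ((Real.sqrt (2*Real.pi*h))⁻¹ • z)) ?_
        refine integral_congr_ae (Filter.Eventually.of_forall fun t => ?_)
        refine AOrth.pertEq1 h t x (χp k t) (χp k' t) _ _ ?_
        refine congrArg (fun z : ℂ => (Real.sqrt (2*Real.pi*h))⁻¹ • z) ?_
        refine integral_congr_ae ?_
        filter_upwards [hff'] with s hs
        exact AOrth.persEq1 h t s (χm j' s) _ _ hs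
      rw [heq, hE]
      exact AOrth.half N B hB1 hh 1 (by norm_num) j j' ((k:ℝ))
        (χm j) (fun t => χp k t * χp k' t) (χm j') f' hf' hf'sm
        ((hχpC k).mul (hχpC k'))
        (fun t => by
          rw [abs_mul]
          exact mul_le_one₀ (habs_p k t) (abs_nonneg _) (habs_p k' t))
        (by
          intro t ht
          apply hχpsupp k
          have hne : χp k t * χp k' t ≠ 0 := ht
          exact fun hz => hne (by rw [hz, zero_mul]))
        (fun t => (AOrth.prod_deriv_bound N D hh (χp k) (χp k') (hχpC k) (hχpC k')
            hDnn (hχpD k) (hχpD k') t).trans (by gcongr))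
        (fun x => habs_m j x) (hχmsupp j) (hχmC j').continuous (fun x => habs_m j' x)
        (hχmsupp j') (|(k:ℝ) - (k':ℝ)|) (abs_nonneg _) hkk'
  · -- second estimate
    by_cases hjj : 2 ≤ |j - j'|
    · have hzero : ∀ t : ℝ, (χm j' t : ℂ) * (χm j t : ℂ) = 0 := by
        intro t
        have : χm j' t = 0 ∨ χm j t = 0 := by
          by_contra hcon
          push_neg at hcon
          have h1 := hχmsupp j' hcon.1
          have h2 := hχmsupp j hcon.2
          have hlt : |(j:ℝ) - (j':ℝ)| < 2 := by
            rw [abs_lt]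
            constructor <;> linarith [h1.1, h1.2, h2.1, h2.2]
          have hge : (2:ℝ) ≤ |(j:ℝ) - (j':ℝ)| := by
            have : ((2:ℤ):ℝ) ≤ (|j - j'| : ℤ) := by exact_mod_cast hjj
            rw [Int.cast_abs] at this
            push_cast at this ⊢
            linarith
          linarith
        rcases this with hz | hz <;> simp [hz]
      have hfn0 : (fun x => (χp k' x : ℂ) *
          semiFTinv h (fun t => (χm j' t : ℂ) * (χm j t : ℂ) *
            semiFT h (fun s => (χp k s : ℂ) * f s) t) x) = (fun _ => (0:ℂ)) := by
        funext x
        simp [semiFTinv, hzero]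
      rw [hfn0, eLpNorm_zero']
      exact zero_le
    · push_neg at hjj
      have hjj' : |(j:ℝ) - (j':ℝ)| ≤ 1 := by
        have : (|j - j'| : ℤ) ≤ 1 := by omega
        have : ((|j - j'| : ℤ) : ℝ) ≤ 1 := by exact_mod_cast this
        rw [Int.cast_abs] at this
        push_cast at this ⊢
        linarith
      have heq : (fun x => (χp k' x : ℂ) *
          semiFTinv h (fun t => (χm j' t : ℂ) * (χm j t : ℂ) *
            semiFT h (fun s => (χp k s : ℂ) * f s) t) x)
          = (fun x => ((χp k' x : ℝ):ℂ) * ((Real.sqrt (2*Real.pi*h))⁻¹ •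
            ∫ t : ℝ, Complex.exp ((↑(-((-1:ℝ)*t*x)/h)) * Complex.I) *
              (((χm j' t * χm j t : ℝ):ℂ) * ((Real.sqrt (2*Real.pi*h))⁻¹ •
                ∫ s : ℝ, Complex.exp ((↑((-1:ℝ)*t*s/h)) * Complex.I)
                  * ((χp k s:ℂ) * f' s))))) := by
        funext x
        simp only [semiFT, semiFTinv]
        refine congrArg (fun z : ℂ => ((χp k' x : ℝ):ℂ) * ((Real.sqrt (2*Real.pi*h))⁻¹ • z)) ?_
        refine integral_congr_ae (Filter.Eventually.of_forall fun t => ?_)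
        refine AOrth.pertEq2 h t x (χm j' t) (χm j t) _ _ ?_
        refine congrArg (fun z : ℂ => (Real.sqrt (2*Real.pi*h))⁻¹ • z) ?_
        refine integral_congr_ae ?_
        filter_upwards [hff'] with s hs
        exact AOrth.persEq2 h t s (χp k s) _ _ hs
      rw [heq, hE]
      rw [show (1 + |(j:ℝ) - (j':ℝ)| + |(k:ℝ) - (k':ℝ)|)
          = (1 + |(k':ℝ)-(k:ℝ)| + |(j:ℝ)-(j':ℝ)|) by rw [abs_sub_comm ((k':ℝ))]; ring]
      exact AOrth.half N B hB1 hh (-1) (by norm_num) k' k ((j':ℝ))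
        (χp k') (fun t => χm j' t * χm j t) (χp k) f' hf' hf'sm
        ((hχmC j').mul (hχmC j))
        (fun t => by
          rw [abs_mul]
          exact mul_le_one₀ (habs_m j' t) (abs_nonneg _) (habs_m j t))
        (by
          intro t ht
          apply hχmsupp j'
          have hne : χm j' t * χm j t ≠ 0 := ht
          exact fun hz => hne (by rw [hz, zero_mul]))
        (fun t => (AOrth.prod_deriv_bound N D hh (χm j') (χm j) (hχmC j') (hχmC j)
            hDnn (hχmD j') (hχmD j) t).trans (by gcongr))
        (fun x => habs_p k' x) (hχpsupp k') (hχpC k).continuous (fun x => habs_p k x)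
        (hχpsupp k) (|(j:ℝ) - (j':ℝ)|) (abs_nonneg _) hjj'
end

section
/- Let Λ₀, Λ₁ be real numbers with 0 < Λ₀ ≤ Λ₁ and Λ₁ ≥ 1, set Λ := ⌈Λ₁/Λ₀⌉, and fix α ∈ (0, 1/2). Then there exists a constant C > 0, depending only on α, Λ₀, Λ₁ and not on h, such that for every h ∈ (0,1) the following holds: with N₀ := ⌈log(1/h)/(6Λ₁)⌉, let Z^∁ be the set of words w = w₀…w_{N₀−1} in the two-letter alphabet {1, ⋆} having fewer than α N₀ letters equal to 1, and let X be the set of words of length (6Λ+1) N₀ over {1, ⋆} which are concatenations w^{(1)} w^{(2)} ⋯ w^{(6Λ+1)} with every w^{(ℓ)} ∈ Z^∁. Then #X = (#Z^∁)^{6Λ+1} ≤ C h^{−(Λ₀^{−1} + 2) α (1 − log α)}. -/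
/-!
Cutting a word into its `6Λ+1` blocks of length `N₀` is a bijection onto tuples of
`N₀`-words, so `#X = (#Zᶜ)^(6Λ+1)`. Giving a word of length `n` the weight
`α ^ (number of ones)`, every word of `Zᶜ` weighs at least `α ^ (αn)` while all words
together weigh `(1 + α)^n ≤ exp (αn)`; hence `#Zᶜ ≤ exp (αn(1 - log α))`. Finally
`(6Λ+1)N₀ ≤ (Λ₀⁻¹+2) log(1/h) + 6Λ+1`, and the additive term goes into `C`.
-/

/-- The `ℓ`-th block of length `N₀` of a word `w` of length `(6Λ+1)N₀` over `Bool`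
(where `true` encodes the letter `1` and `false` the letter `⋆`). -/
def blockWord (Λ N₀ : ℕ) (w : Fin ((6 * Λ + 1) * N₀) → Bool)
    (ℓ : Fin (6 * Λ + 1)) : Fin N₀ → Bool :=
  fun j => w ⟨ℓ.1 * N₀ + j.1, by
    have hj := j.isLt
    have hl : ℓ.1 + 1 ≤ 6 * Λ + 1 := ℓ.isLt
    calc ℓ.1 * N₀ + j.1 < ℓ.1 * N₀ + N₀ := by omega
      _ = (ℓ.1 + 1) * N₀ := by ring
      _ ≤ (6 * Λ + 1) * N₀ := Nat.mul_le_mul hl (le_refl N₀)⟩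

open Finset Real

def blockWordEquiv (Λ N₀ : ℕ) :
    (Fin ((6 * Λ + 1) * N₀) → Bool) ≃ (Fin (6 * Λ + 1) → Fin N₀ → Bool) :=
  (Equiv.arrowCongr finProdFinEquiv.symm (Equiv.refl Bool)).trans (Equiv.curry _ _ _)

lemma blockWordEquiv_apply (Λ N₀ : ℕ) (w : Fin ((6 * Λ + 1) * N₀) → Bool) :
    blockWordEquiv Λ N₀ w = blockWord Λ N₀ w := by
  funext ℓ j
  simp only [blockWordEquiv, blockWord, Equiv.trans_apply, Equiv.arrowCongr_apply,
    Equiv.symm_symm, Equiv.coe_refl, Function.comp_apply, id, Equiv.curry_apply,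
    Function.curry_apply]
  congr 1
  ext
  simp only [finProdFinEquiv_apply_val]
  ring

lemma ncard_setOf_forall_blockWord_mem (Λ N₀ : ℕ) (S : Set (Fin N₀ → Bool)) :
    {w | ∀ ℓ, blockWord Λ N₀ w ℓ ∈ S}.ncard = S.ncard ^ (6 * Λ + 1) := by
  rw [← Nat.card_coe_set_eq, ← Nat.card_coe_set_eq]
  calc Nat.card {w | ∀ ℓ, blockWord Λ N₀ w ℓ ∈ S}
      = Nat.card {f : Fin (6 * Λ + 1) → Fin N₀ → Bool // ∀ ℓ, f ℓ ∈ S} :=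
        Nat.card_congr <| (blockWordEquiv Λ N₀).subtypeEquiv fun w => by
          rw [blockWordEquiv_apply]; rfl
    _ = Nat.card (Fin (6 * Λ + 1) → S) := Nat.card_congr Equiv.subtypePiEquivPi
    _ = Nat.card S ^ (6 * Λ + 1) := by
        simp only [Nat.card_fun, Nat.card_eq_fintype_card, Fintype.card_fin]

lemma sum_pow_card_filter_eq_true {ι R : Type*} [Fintype ι] [DecidableEq ι] [CommSemiring R]
    (a : R) :
    ∑ w : ι → Bool, a ^ #{j | w j = true} = (1 + a) ^ Fintype.card ι := by
  calc ∑ w : ι → Bool, a ^ #{j | w j = true}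
      = ∑ w : ι → Bool, ∏ j, if w j = true then a else 1 := by
        simp only [prod_ite, prod_const, one_pow, mul_one]
    _ = ∏ _j : ι, ∑ b : Bool, if b = true then a else 1 :=
        (Fintype.prod_sum fun (_ : ι) (b : Bool) => if b = true then a else 1).symm
    _ = (1 + a) ^ Fintype.card ι := by simp [add_comm]

lemma ncard_card_filter_true_lt_le {ι : Type*} [Fintype ι] [DecidableEq ι] {α : ℝ}
    (hα : 0 < α) (hα1 : α ≤ 1) :
    ({w : ι → Bool | (#{j | w j = true} : ℝ) < α * Fintype.card ι}.ncard : ℝ) ≤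
      exp (α * Fintype.card ι * (1 - log α)) := by
  set n := Fintype.card ι
  set Z := {w : ι → Bool | (#{j | w j = true} : ℝ) < α * n}
  have hweight : (Z.ncard : ℝ) * α ^ (α * n) ≤ exp (α * n) :=
    calc (Z.ncard : ℝ) * α ^ (α * n)
        ≤ ∑ w ∈ Z.toFinset, α ^ #{j | w j = true} := by
          rw [Set.ncard_eq_toFinset_card', ← nsmul_eq_mul, ← sum_const]
          refine sum_le_sum fun w hw => ?_
          rw [← rpow_natCast]
          exact rpow_le_rpow_of_exponent_ge hα hα1 (Set.mem_toFinset.mp hw).le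
      _ ≤ ∑ w : ι → Bool, α ^ #{j | w j = true} :=
          sum_le_sum_of_subset_of_nonneg (subset_univ _) fun _ _ _ => by positivity
      _ = (1 + α) ^ n := sum_pow_card_filter_eq_true α
      _ ≤ exp α ^ n := pow_le_pow_left₀ (by positivity) (by linarith [add_one_le_exp α]) n
      _ = exp (α * n) := by rw [← exp_nat_mul, mul_comm]
  rw [rpow_def_of_pos hα, ← le_div_iff₀ (exp_pos _), ← exp_sub] at hweight
  exact hweight.trans_eq (by ring_nf)

lemma mul_natCeil_div_le {c L d : ℝ} (hc : 0 ≤ c) (hL : 0 ≤ L) (hd : 0 < d) :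
    c * ⌈L / d⌉₊ ≤ c / d * L + c :=
  calc c * ⌈L / d⌉₊ ≤ c * (L / d + 1) :=
        mul_le_mul_of_nonneg_left (Nat.ceil_lt_add_one (by positivity)).le hc
    _ = c / d * L + c := by ring

lemma six_mul_natCeil_div_add_one_le {Λ₀ Λ₁ : ℝ} (hΛ₀ : 0 < Λ₀) (hΛ₁ : 1 ≤ Λ₁) :
    (6 * ⌈Λ₁ / Λ₀⌉₊ + 1 : ℝ) / (6 * Λ₁) ≤ Λ₀⁻¹ + 2 := by
  have hceil : (⌈Λ₁ / Λ₀⌉₊ : ℝ) ≤ Λ₁ / Λ₀ + 1 :=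
    (Nat.ceil_lt_add_one (div_nonneg (by linarith) hΛ₀.le)).le
  rw [div_le_iff₀ (by linarith)]
  calc (6 * ⌈Λ₁ / Λ₀⌉₊ + 1 : ℝ) ≤ 6 * (Λ₁ / Λ₀) + 7 := by linarith
    _ ≤ (Λ₀⁻¹ + 2) * (6 * Λ₁) := by rw [div_eq_mul_inv]; linarith

/-- **Counting of uncontrolled words.**
Let `0 < Λ₀ ≤ Λ₁`, `Λ₁ ≥ 1`, `Λ := ⌈Λ₁/Λ₀⌉`, `α ∈ (0,1/2)`.  There is a constant
`C > 0` depending only on `α, Λ₀, Λ₁` such that for every `h ∈ (0,1)`, with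
`N₀ := ⌈log(1/h)/(6Λ₁)⌉`, the set `Z^∁` of words of length `N₀` over `{1,⋆}`
having fewer than `αN₀` letters equal to `1`, and the set `X` of words of length
`(6Λ+1)N₀` all of whose `N₀`-blocks lie in `Z^∁`, satisfy
`#X = (#Z^∁)^{6Λ+1} ≤ C h^{−(Λ₀⁻¹+2)α(1−log α)}`. -/
theorem stmt5 :
    ∀ Λ₀ Λ₁ α : ℝ, 0 < Λ₀ → Λ₀ ≤ Λ₁ → 1 ≤ Λ₁ → 0 < α → α < 1 / 2 →
    ∃ C > 0, ∀ h : ℝ, 0 < h → h < 1 →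
    ∀ N₀ Λ : ℕ, N₀ = ⌈Real.log (1 / h) / (6 * Λ₁)⌉₊ → Λ = ⌈Λ₁ / Λ₀⌉₊ →
    ∀ (Zc : Set (Fin N₀ → Bool)) (X : Set (Fin ((6 * Λ + 1) * N₀) → Bool)),
      Zc = {w | ((Finset.univ.filter fun j => w j = true).card : ℝ) < α * N₀} →
      X = {w | ∀ ℓ : Fin (6 * Λ + 1), blockWord Λ N₀ w ℓ ∈ Zc} →
      X.ncard = Zc.ncard ^ (6 * Λ + 1) ∧
      (X.ncard : ℝ) ≤ C * h ^ (-((Λ₀⁻¹ + 2) * α * (1 - Real.log α))) := by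
  intro Λ₀ Λ₁ α hΛ₀ _ hΛ₁ hα hα2
  set B := α * (1 - log α)
  have hB : 0 < B := mul_pos hα (by linarith [log_neg hα (by linarith : α < 1)])
  refine ⟨exp (B * (6 * ⌈Λ₁ / Λ₀⌉₊ + 1)), exp_pos _, ?_⟩
  rintro h hh0 hh1 N₀ Λ hN₀ rfl Zc X hZc rfl
  set c : ℝ := 6 * ⌈Λ₁ / Λ₀⌉₊ + 1
  set L := log (1 / h)
  have hL : 0 < L := log_pos (by rw [one_div]; exact one_lt_inv_iff₀.mpr ⟨hh0, hh1⟩)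
  have hZc_le : (Zc.ncard : ℝ) ≤ exp (α * N₀ * (1 - log α)) := by
    simpa only [hZc, Fintype.card_fin] using
      ncard_card_filter_true_lt_le (ι := Fin N₀) hα (by linarith)
  have hlen : c * N₀ ≤ (Λ₀⁻¹ + 2) * L + c := by
    rw [hN₀]
    refine (mul_natCeil_div_le (by positivity) hL.le (by positivity)).trans ?_
    gcongr
    exact six_mul_natCeil_div_add_one_le hΛ₀ hΛ₁
  rw [ncard_setOf_forall_blockWord_mem]
  refine ⟨rfl, ?_⟩
  calc ((Zc.ncard ^ (6 * ⌈Λ₁ / Λ₀⌉₊ + 1) : ℕ) : ℝ)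
      ≤ exp (α * N₀ * (1 - log α)) ^ (6 * ⌈Λ₁ / Λ₀⌉₊ + 1) := by push_cast; gcongr
    _ = exp (B * (c * N₀)) := by rw [← exp_nat_mul]; push_cast [B, c]; ring_nf
    _ ≤ exp (B * ((Λ₀⁻¹ + 2) * L + c)) := by gcongr
    _ = exp (B * c) * h ^ (-((Λ₀⁻¹ + 2) * α * (1 - log α))) := by
        rw [rpow_def_of_pos hh0, ← exp_add]
        simp only [L, B, one_div, log_inv]
        ring_nf
end
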